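/- Let λ ∈ 𝒫^l_n and let s, t be column-strict λ-tableaux. Then w_s ≤ w_t in the Bruhat order on S_n if and only if Shape(s↓m)' ⊵ Shape(t↓m)' for all m = 1,…,n. -/

import Mathlib

namespace FS

open scoped Classical

/-- A node `(r, c, m)`: row `r`, column `c`, component `m` (all 1-based). -/
abbrev Node := ℕ × ℕ × ℕ

/-- Membership of a node in the Young diagram of the multipartition `p`,
where `p m r` is the `r`-th part of the `m`-th component. -/
def InDiag (p : ℕ → ℕ → ℕ) (A : Node) : Prop :=
  1 ≤ A.2.1 ∧ A.2.1 ≤ p A.2.2 A.1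

/-- `p` is an `l`-multipartition of `n` (components indexed `1,…,l`, rows indexed `1,…`). -/
def IsMP (l n : ℕ) (p : ℕ → ℕ → ℕ) : Prop :=
  (∀ m r, (m = 0 ∨ l < m ∨ r = 0 ∨ n < r) → p m r = 0) ∧
  (∀ m r, 1 ≤ r → p m (r + 1) ≤ p m r) ∧
  (∑ m ∈ Finset.Icc 1 l, ∑ r ∈ Finset.Icc 1 n, p m r) = n

/-- Total size of an `l`-multicomposition (rows bounded by `n`). -/
def mpSize (l n : ℕ) (p : ℕ → ℕ → ℕ) : ℕ :=
  ∑ m ∈ Finset.Icc 1 l, ∑ r ∈ Finset.Icc 1 n, p m r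

/-- Size of the `m`-th component. -/
def compSize (n : ℕ) (p : ℕ → ℕ → ℕ) (m : ℕ) : ℕ :=
  ∑ r ∈ Finset.Icc 1 n, p m r

/-- Length of column `c` of component `m`, i.e. `(p^(m))'_c`. -/
def colLen (n : ℕ) (p : ℕ → ℕ → ℕ) (m c : ℕ) : ℕ :=
  ((Finset.Icc 1 n).filter fun r => c ≤ p m r).card

/-- Dominance order on `l`-multicompositions: `Dom l N p q` means `p ⊵ q`. -/
def Dom (l N : ℕ) (p q : ℕ → ℕ → ℕ) : Prop :=
  ∀ m r, 1 ≤ m → m ≤ l →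
    (∑ m' ∈ Finset.Icc 1 (m - 1), compSize N q m') + ∑ r' ∈ Finset.Icc 1 r, q m r' ≤
      (∑ m' ∈ Finset.Icc 1 (m - 1), compSize N p m') + ∑ r' ∈ Finset.Icc 1 r, p m r'

/-- `t` is a `p`-tableau: a bijection from the diagram of `p` onto `{1,…,n}`. -/
def IsTab (n : ℕ) (p : ℕ → ℕ → ℕ) (t : Node → ℕ) : Prop :=
  (∀ A, InDiag p A → 1 ≤ t A ∧ t A ≤ n) ∧
  (∀ A B, InDiag p A → InDiag p B → t A = t B → A = B) ∧
  (∀ i, 1 ≤ i → i ≤ n → ∃ A, InDiag p A ∧ t A = i)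

/-- Entries increase from left to right along each row. -/
def RowStrict (p : ℕ → ℕ → ℕ) (t : Node → ℕ) : Prop :=
  ∀ r c m, InDiag p (r, c, m) → InDiag p (r, c + 1, m) → t (r, c, m) < t (r, c + 1, m)

/-- Entries increase down each column. -/
def ColStrict (p : ℕ → ℕ → ℕ) (t : Node → ℕ) : Prop :=
  ∀ r c m, InDiag p (r, c, m) → InDiag p (r + 1, c, m) → t (r, c, m) < t (r + 1, c, m)

/-- A standard tableau is both row-strict and column-strict. -/
def IsStd (p : ℕ → ℕ → ℕ) (t : Node → ℕ) : Prop := RowStrict p t ∧ ColStrict p t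

/-- The tableau `t_λ`, obtained by writing `1,…,n` in order down successive columns
from left to right (components from `l` down to `1`). -/
def colTab (l n : ℕ) (p : ℕ → ℕ → ℕ) : Node → ℕ := fun A =>
  (∑ m' ∈ Finset.Icc (A.2.2 + 1) l, compSize n p m') +
    (∑ c' ∈ Finset.Icc 1 (A.2.1 - 1), colLen n p A.2.2 c') + A.1

/-- The tableau `t^λ`, obtained by writing `1,…,n` in order along successive rows
from top to bottom (components from `1` up to `l`). -/
def rowTab (n : ℕ) (p : ℕ → ℕ → ℕ) : Node → ℕ := fun A =>
  (∑ m' ∈ Finset.Icc 1 (A.2.2 - 1), compSize n p m') +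
    (∑ r' ∈ Finset.Icc 1 (A.1 - 1), p A.2.2 r') + A.2.1

/-- The Coxeter generator `s_i = (i, i+1)` of the symmetric group. -/
def sw (i : ℕ) : Equiv.Perm ℕ := Equiv.swap i (i + 1)

/-- The product `s_{i_1} ⋯ s_{i_k}` corresponding to a word `L = [i_1,…,i_k]`. -/
def wordProd (L : List ℕ) : Equiv.Perm ℕ := (L.map sw).prod

/-- `L` is an expression for `w` in the Coxeter generators `s_1,…,s_{n-1}` of `S_n`. -/
def IsWord (n : ℕ) (L : List ℕ) (w : Equiv.Perm ℕ) : Prop :=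
  (∀ i ∈ L, 1 ≤ i ∧ i + 1 ≤ n) ∧ wordProd L = w

/-- The Coxeter length of `w ∈ S_n`. -/
noncomputable def len (n : ℕ) (w : Equiv.Perm ℕ) : ℕ :=
  sInf {k | ∃ L, IsWord n L w ∧ L.length = k}

/-- `L` is a reduced expression for `w ∈ S_n`. -/
def IsReduced (n : ℕ) (L : List ℕ) (w : Equiv.Perm ℕ) : Prop :=
  IsWord n L w ∧ L.length = len n w

/-- The Bruhat order on `S_n`: `x ≤ w` iff some reduced expression for `w` has an
expression for `x` as a subsequence. -/
def BruhatLE (n : ℕ) (x w : Equiv.Perm ℕ) : Prop :=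
  ∃ L, IsReduced n L w ∧ ∃ L', L'.Sublist L ∧ wordProd L' = x

/-- Strict Bruhat order. -/
def BruhatLT (n : ℕ) (x w : Equiv.Perm ℕ) : Prop := BruhatLE n x w ∧ x ≠ w

/-- The left (weak) order on `S_n`: `x ≤_L w` iff `ℓ(w) = ℓ(w x⁻¹) + ℓ(x)`. -/
def LeftLE (n : ℕ) (x w : Equiv.Perm ℕ) : Prop :=
  len n w = len n (w * x⁻¹) + len n x

/-- `w` is a permutation of `{1,…,n}` (fixing everything else). -/
def PermOf (n : ℕ) (w : Equiv.Perm ℕ) : Prop := ∀ i, i = 0 ∨ n < i → w i = i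

/-- `w` is the permutation sending the base tableau `base` to the tableau `t`
(e.g. `w = w_t` when `base = t_λ`). -/
def IsPermOfTab (n : ℕ) (p : ℕ → ℕ → ℕ) (base t : Node → ℕ) (w : Equiv.Perm ℕ) : Prop :=
  PermOf n w ∧ ∀ A, InDiag p A → w (base A) = t A

/-- `Shape(t↓j)`: the multicomposition whose `(m, r)` entry is the number of nodes in
row `r` of component `m` whose entry under `t` is at most `j`. -/
def shape (n : ℕ) (p : ℕ → ℕ → ℕ) (t : Node → ℕ) (j : ℕ) : ℕ → ℕ → ℕ :=
  fun m r => ((Finset.Icc 1 n).filter fun c => c ≤ p m r ∧ t (r, c, m) ≤ j).card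

/-- `Shape(t↓j)'`: the conjugate multicomposition, whose `(m, c)` entry is the number of
nodes in column `c` of component `l + 1 - m` whose entry under `t` is at most `j`. -/
def shapeConj (l n : ℕ) (p : ℕ → ℕ → ℕ) (t : Node → ℕ) (j : ℕ) : ℕ → ℕ → ℕ :=
  fun m c => ((Finset.Icc 1 n).filter fun r => c ≤ p (l + 1 - m) r ∧ t (r, c, l + 1 - m) ≤ j).card

/-- `A` lies weakly to the left of `B`. -/
def WeaklyLeft (A B : Node) : Prop :=
  B.2.2 < A.2.2 ∨ (A.2.2 = B.2.2 ∧ A.2.1 ≤ B.2.1)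

/-- `A` lies weakly above `B`. -/
def WeaklyAbove (A B : Node) : Prop :=
  A.2.2 < B.2.2 ∨ (A.2.2 = B.2.2 ∧ A.1 ≤ B.1)

/-- `A` lies weakly to the right of `B`. -/
def WeaklyRight (A B : Node) : Prop :=
  A.2.2 < B.2.2 ∨ (A.2.2 = B.2.2 ∧ B.2.1 ≤ A.2.1)

/-- `t` (a `mu`-tableau) is `lam`-column-dominated on `1,…,j`: each `i ≤ j` appears in `t`
at least as far to the left as it does in `t_lam`. -/
def ColDomOn (l n : ℕ) (lam mu : ℕ → ℕ → ℕ) (t : Node → ℕ) (j : ℕ) : Prop :=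
  ∀ i A B, 1 ≤ i → i ≤ j → InDiag mu A → t A = i → InDiag lam B →
    colTab l n lam B = i → WeaklyLeft A B

/-- `t` is weakly `lam`-column-dominated on `1,…,j`: each `i ≤ j` appears in `t` in a
component at least as far to the left as it does in `t_lam`. -/
def WColDomOn (l n : ℕ) (lam mu : ℕ → ℕ → ℕ) (t : Node → ℕ) (j : ℕ) : Prop :=
  ∀ i A B, 1 ≤ i → i ≤ j → InDiag mu A → t A = i → InDiag lam B →
    colTab l n lam B = i → B.2.2 ≤ A.2.2

/-- `t` (a `mu`-tableau) is `lam`-row-dominated on `1,…,j`: each `i ≤ j` appears in `t`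
at least as high as it does in `t^lam`. -/
def RowDomOn (n : ℕ) (lam mu : ℕ → ℕ → ℕ) (t : Node → ℕ) (j : ℕ) : Prop :=
  ∀ i A B, 1 ≤ i → i ≤ j → InDiag mu A → t A = i → InDiag lam B →
    rowTab n lam B = i → WeaklyAbove A B

/-- The multipartition `λ_L(c, m)`: the first `c` columns of component `m`, followed by
components `m+1,…,l`. -/
def leftPart (lam : ℕ → ℕ → ℕ) (c m : ℕ) : ℕ → ℕ → ℕ := fun k r =>
  if k = 0 then 0 else if k = 1 then min (lam m r) c else lam (m + k - 1) r

/-- The multipartition `λ_R(c, m)`: components `1,…,m-1`, followed by the part of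
component `m` after its first `c` columns. -/
def rightPart (lam : ℕ → ℕ → ℕ) (c m : ℕ) : ℕ → ℕ → ℕ := fun k r =>
  if k < m then lam k r else if k = m then lam m r - c else 0

/-- The multipartition `λ_T(r₀, m)`: components `1,…,m-1`, followed by the first `r₀`
rows of component `m`. -/
def topPart (lam : ℕ → ℕ → ℕ) (r₀ m : ℕ) : ℕ → ℕ → ℕ := fun k r =>
  if k < m then lam k r else if k = m then (if r ≤ r₀ then lam m r else 0) else 0

/-- The multipartition `λ_B(r₀, m)`: the rows of component `m` after row `r₀`, followed
by components `m+1,…,l`. -/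
def botPart (lam : ℕ → ℕ → ℕ) (r₀ m : ℕ) : ℕ → ℕ → ℕ := fun k r =>
  if k = 0 ∨ r = 0 then 0 else if k = 1 then lam m (r₀ + r) else lam (m + k - 1) r

/-- The glued tableau `t_L # t_R`: places `1,…,n_L` on the left part as in `t_L`, and
places `n_L + t_R(A)` at the node corresponding to each node `A` of the right part. -/
def glueLR (nL c m : ℕ) (tL tR : Node → ℕ) : Node → ℕ := fun A =>
  if A.2.2 < m then nL + tR A
  else if A.2.2 = m then
    (if A.2.1 ≤ c then tL (A.1, A.2.1, 1) else nL + tR (A.1, A.2.1 - c, m))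
  else tL (A.1, A.2.1, A.2.2 - m + 1)

/-- The tableau `t⁺` obtained from a tableau `t` of `μ_R(1,m)` by increasing all entries
by `k`, adjoining a first column with entries `1,…,k` to component `m`, and adjoining
empty components `m+1,…,l`. -/
def addFirstCol (k m : ℕ) (t : Node → ℕ) : Node → ℕ := fun A =>
  if A.2.2 = m then (if A.2.1 = 1 then A.1 else k + t (A.1, A.2.1 - 1, m))
  else k + t A

/-- The tableau `t⁺` obtained from a tableau `t` of `μ_L(d-1,m)` by adjoining empty
components `1,…,m-1` and adjoining a column `d` to component `m` with entries
`nk+1,…,nk+k` from top to bottom. -/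
def addLastCol (nk m d : ℕ) (t : Node → ℕ) : Node → ℕ := fun A =>
  if A.2.2 = m then (if A.2.1 = d then nk + A.1 else t (A.1, A.2.1, 1))
  else t (A.1, A.2.1, A.2.2 - m + 1)

/-- The `i`-th smallest element of a finite set of naturals (1-based). -/
def nthElt (S : Finset ℕ) (i : ℕ) : ℕ := (S.sort (· ≤ ·)).getD (i - 1) 0

/-- The set `S_B` of entries of `t_λ` lying in the bottom region (component `> m`, or
component `m` in a row `> r₀`). -/
noncomputable def SB (l n : ℕ) (lam : ℕ → ℕ → ℕ) (r₀ m : ℕ) : Finset ℕ :=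
  (Finset.Icc 1 n).filter fun i =>
    ∃ A, InDiag lam A ∧ colTab l n lam A = i ∧ (m < A.2.2 ∨ (A.2.2 = m ∧ r₀ < A.1))

/-- The glued tableau `t #̄ s`: on the bottom region the entries are `lab_B ∘ t` and on
the top region they are `lab_T ∘ s`, where `lab_B`, `lab_T` are the order-preserving
bijections onto `S_B`, `S_T`. -/
def glueBT (S_B S_T : Finset ℕ) (r₀ m : ℕ) (tB tT : Node → ℕ) : Node → ℕ := fun A =>
  if A.2.2 < m then nthElt S_T (tT A)
  else if A.2.2 = m then
    (if A.1 ≤ r₀ then nthElt S_T (tT A) else nthElt S_B (tB (A.1 - r₀, A.2.1, 1)))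
  else nthElt S_B (tB (A.1, A.2.1, A.2.2 - m + 1))

/-- The residue of a node `(r, c, m)` with respect to the multicharge `κ`:
`κ_m + c - r` in `ℤ/eℤ` (with `ZMod 0 = ℤ` encoding `e = ∞`). -/
def resNode (e : ℕ) (κ : ℕ → ZMod e) (A : Node) : ZMod e :=
  κ A.2.2 + (A.2.1 : ZMod e) - (A.1 : ZMod e)

/-!
By Ehresmann's tableau criterion, `x ≤ w` in the Bruhat order on permutations of `{1, …, n}`
if and only if `#{a ≤ k | w a ≤ j} ≤ #{a ≤ k | x a ≤ j}` for all `k` and `j`; both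
directions go by induction along a reduced word, comparing the two counts only at `k = i` when
multiplying by `s_i`. Since `w_t` sends the entry of `t_λ` at a node to the entry of `t` there,
`#{a ≤ k | w_t a ≤ j}` counts the nodes among the first `k` in the column reading of `t_λ`
whose entry in `t` is at most `j`. When `k` ends a column of `t_λ`, this is a partial sum in
the dominance order for `Shape(t↓j)'`. Inside a column, column-strictness of `t` makes the
count grow by one per row until it reaches its value at the bottom, so dominance at the column
ends propagates to every `k`.
-/

open Finset

lemma sw_apply (i a : ℕ) : sw i a = if a = i then i + 1 else if a = i + 1 then i else a := by
  unfold sw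
  split_ifs with h1 h2
  · rw [h1, Equiv.swap_apply_left]
  · rw [h2, Equiv.swap_apply_right]
  · exact Equiv.swap_apply_of_ne_of_ne h1 h2

lemma mul_sw_mul_sw (w : Equiv.Perm ℕ) (i : ℕ) : w * sw i * sw i = w := by
  rw [mul_assoc, sw, Equiv.swap_mul_self, mul_one]

lemma wordProd_append_singleton (L : List ℕ) (i : ℕ) :
    wordProd (L ++ [i]) = wordProd L * sw i := by
  simp [wordProd]

lemma IsWord.append_singleton {n i : ℕ} {L : List ℕ} {w : Equiv.Perm ℕ} (hL : IsWord n L w)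
    (hi : 1 ≤ i) (hin : i + 1 ≤ n) : IsWord n (L ++ [i]) (w * sw i) := by
  refine ⟨fun x hx => ?_, by rw [wordProd_append_singleton, hL.2]⟩
  rcases List.mem_append.mp hx with hx | hx
  · exact hL.1 x hx
  · rw [List.mem_singleton.mp hx]; exact ⟨hi, hin⟩

section PermOf

variable {n : ℕ}

lemma PermOf.mul {u v : Equiv.Perm ℕ} (hu : PermOf n u) (hv : PermOf n v) :
    PermOf n (u * v) := fun a ha => by
  rw [Equiv.Perm.mul_apply, hv a ha, hu a ha]

lemma permOf_sw {i : ℕ} (hi : 1 ≤ i) (hin : i + 1 ≤ n) : PermOf n (sw i) := fun a ha => by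
  rw [sw_apply]; split_ifs <;> omega

lemma permOf_wordProd {L : List ℕ} (hL : ∀ i ∈ L, 1 ≤ i ∧ i + 1 ≤ n) :
    PermOf n (wordProd L) := by
  induction L using List.reverseRecOn with
  | nil => exact fun _ _ => rfl
  | append_singleton L i ih =>
    rw [wordProd_append_singleton]
    have hi := hL i (by simp)
    exact (ih fun x hx => hL x (by simp [hx])).mul (permOf_sw hi.1 hi.2)

lemma PermOf.apply_mem_Icc {w : Equiv.Perm ℕ} (hw : PermOf n w) {a : ℕ} (ha : a ∈ Icc 1 n) :
    w a ∈ Icc 1 n := by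
  rw [mem_Icc] at ha ⊢
  by_contra h
  have := w.injective (hw (w a) (by omega))
  omega

end PermOf

lemma lt_or_gt_apply_succ (w : Equiv.Perm ℕ) (i : ℕ) : w i < w (i + 1) ∨ w (i + 1) < w i :=
  lt_or_gt_of_ne (w.injective.ne (by omega))

lemma eq_one_of_forall_apply_le {u : Equiv.Perm ℕ} (h : ∀ a, u a ≤ a) : u = 1 := by
  ext a
  simp only [Equiv.Perm.one_apply]
  induction a using Nat.strong_induction_on with
  | _ a ih =>
    by_contra hne
    exact hne (u.injective (ih (u a) (lt_of_le_of_ne (h a) hne)))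

noncomputable def rankCount (f : ℕ → ℕ) (k j : ℕ) : ℕ :=
  #((Icc 1 k).filter fun a => f a ≤ j)

section RankCount

variable {f g : ℕ → ℕ} {k j : ℕ}

@[simp] lemma rankCount_zero : rankCount f 0 j = 0 := by simp [rankCount]

lemma rankCount_succ :
    rankCount f (k + 1) j = rankCount f k j + if f (k + 1) ≤ j then 1 else 0 := by
  simp only [rankCount, card_filter]
  exact sum_Icc_succ_top (by omega) _

lemma rankCount_add (N d : ℕ) :
    rankCount f (N + d) j = rankCount f N j + rankCount (fun b => f (N + b)) d j := by
  induction d with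
  | zero => simp
  | succ d ih =>
    rw [← add_assoc, rankCount_succ, rankCount_succ, ih, add_assoc]
    rfl

lemma rankCount_congr (h : ∀ a, 1 ≤ a → a ≤ k → f a = g a) :
    rankCount f k j = rankCount g k j := by
  unfold rankCount
  congr 1
  exact filter_congr fun a ha => by rw [h a (mem_Icc.mp ha).1 (mem_Icc.mp ha).2]

lemma rankCount_eq_of_le {n : ℕ} {w : Equiv.Perm ℕ} (hw : PermOf n w) (hj : j ≤ n) (hk : n ≤ k) :
    rankCount w k j = rankCount w n j := by
  unfold rankCount
  congr 1
  ext a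
  simp only [mem_filter, mem_Icc]
  refine ⟨fun ⟨⟨h₁, _⟩, h₃⟩ => ⟨⟨h₁, ?_⟩, h₃⟩, fun ⟨⟨h₁, h₂⟩, h₃⟩ => ⟨⟨h₁, h₂.trans hk⟩, h₃⟩⟩
  by_contra
  have := hw a (by omega)
  omega

end RankCount

section RankCountSw

variable {w : Equiv.Perm ℕ} {i k j : ℕ}

-- The coercion `⇑(w * sw i)` must be explicit: `rankCount (w * sw i)` elaborates `*` as the
-- pointwise product of functions `ℕ → ℕ`.

lemma rankCount_mul_sw_of_ne (hi : 1 ≤ i) (hk : k ≠ i) :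
    rankCount ⇑(w * sw i) k j = rankCount w k j := by
  refine card_equiv (sw i) fun a => ?_
  simp only [mem_filter, mem_Icc, Equiv.Perm.mul_apply, sw_apply]
  split_ifs <;> omega

lemma rankCount_mul_sw_self (hi : 1 ≤ i) :
    rankCount ⇑(w * sw i) i j = rankCount w (i - 1) j + if w (i + 1) ≤ j then 1 else 0 := by
  obtain ⟨i, rfl⟩ : ∃ i', i = i' + 1 := ⟨i - 1, by omega⟩
  rw [rankCount_succ, rankCount_mul_sw_of_ne hi (by omega), Equiv.Perm.mul_apply, sw_apply,
    if_pos rfl]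
  rfl

lemma rankCount_window (hi : 1 ≤ i) :
    rankCount w i j = rankCount w (i - 1) j + (if w i ≤ j then 1 else 0) ∧
      rankCount w (i + 1) j = rankCount w (i - 1) j + (if w i ≤ j then 1 else 0) +
        if w (i + 1) ≤ j then 1 else 0 := by
  obtain ⟨i, rfl⟩ : ∃ i', i = i' + 1 := ⟨i - 1, by omega⟩
  exact ⟨rankCount_succ, by rw [rankCount_succ, rankCount_succ]; rfl⟩

end RankCountSw

def RankLE (n : ℕ) (x w : Equiv.Perm ℕ) : Prop :=
  ∀ k j, 1 ≤ j → j ≤ n → rankCount w k j ≤ rankCount x k j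

section RankLE

variable {n i : ℕ} {x y w : Equiv.Perm ℕ}

lemma RankLE.refl (n : ℕ) (w : Equiv.Perm ℕ) : RankLE n w w := fun _ _ _ _ => le_rfl

lemma RankLE.trans (hxy : RankLE n x y) (hyw : RankLE n y w) : RankLE n x w :=
  fun k j hj hjn => (hyw k j hj hjn).trans (hxy k j hj hjn)

lemma rankLE_mul_sw_of_lt (hi : 1 ≤ i) (hw : w i < w (i + 1)) : RankLE n w (w * sw i) := by
  intro k j _ _
  rcases eq_or_ne k i with rfl | hk
  · rw [rankCount_mul_sw_self hi, (rankCount_window hi).1]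
    split_ifs <;> omega
  · rw [rankCount_mul_sw_of_ne hi hk]

lemma RankLE.mul_sw (h : RankLE n x w) (hi : 1 ≤ i) (hxw : w i < w (i + 1) ∨ x (i + 1) < x i) :
    RankLE n (x * sw i) (w * sw i) := by
  intro k j hj hjn
  rcases eq_or_ne k i with rfl | hk
  · have h₁ := h (k - 1) j hj hjn
    have h₂ := h k j hj hjn
    have h₃ := h (k + 1) j hj hjn
    rw [rankCount_mul_sw_self hi, rankCount_mul_sw_self hi]
    rw [(rankCount_window hi).1, (rankCount_window hi).1] at h₂
    rw [(rankCount_window hi).2, (rankCount_window hi).2] at h₃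
    split_ifs at * <;> omega
  · rw [rankCount_mul_sw_of_ne hi hk, rankCount_mul_sw_of_ne hi hk]
    exact h k j hj hjn

lemma RankLE.le_mul_sw (h : RankLE n x w) (hi : 1 ≤ i) (hw : w (i + 1) < w i)
    (hx : x i < x (i + 1)) : RankLE n x (w * sw i) := by
  intro k j hj hjn
  rcases eq_or_ne k i with rfl | hk
  · have h₃ := h (k + 1) j hj hjn
    rw [rankCount_mul_sw_self hi, (rankCount_window hi).1]
    rw [(rankCount_window hi).2, (rankCount_window hi).2] at h₃
    have h₁ := h (k - 1) j hj hjn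
    split_ifs at * <;> omega
  · rw [rankCount_mul_sw_of_ne hi hk]
    exact h k j hj hjn

end RankLE

noncomputable def invCount (n : ℕ) (w : Equiv.Perm ℕ) : ℕ :=
  #((Icc 1 n ×ˢ Icc 1 n).filter fun p => p.1 < p.2 ∧ w p.2 < w p.1)

section InvCount

variable {n i : ℕ} {w : Equiv.Perm ℕ}

@[simp] lemma invCount_one : invCount n 1 = 0 := by
  rw [invCount, card_eq_zero, filter_eq_empty_iff]
  intro p _
  simp only [Equiv.Perm.one_apply]
  omega

/-- Right multiplication by `s_i` permutes the inversions of `w` other than `(i, i + 1)`. -/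
lemma invCount_mul_sw_add_one (hi : 1 ≤ i) (hin : i + 1 ≤ n) (hw : w (i + 1) < w i) :
    invCount n (w * sw i) + 1 = invCount n w := by
  have hmem :
      (i, i + 1) ∈ (Icc 1 n ×ˢ Icc 1 n).filter fun p => p.1 < p.2 ∧ w p.2 < w p.1 := by
    simp only [mem_filter, mem_product, mem_Icc]
    omega
  rw [invCount, invCount, ← card_erase_add_one hmem]
  congr 1
  refine card_equiv ((sw i).prodCongr (sw i)) fun ⟨a, b⟩ => ?_
  simp only [mem_filter, mem_erase, mem_product, mem_Icc, Equiv.prodCongr_apply, Prod.map,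
    Equiv.Perm.mul_apply, ne_eq, Prod.mk.injEq, sw_apply]
  split_ifs <;> grind

lemma invCount_mul_sw_of_lt (hi : 1 ≤ i) (hin : i + 1 ≤ n) (hw : w i < w (i + 1)) :
    invCount n (w * sw i) = invCount n w + 1 := by
  have h := invCount_mul_sw_add_one (w := w * sw i) hi hin (by simpa [sw_apply] using hw)
  rwa [mul_sw_mul_sw, eq_comm] at h

lemma invCount_mul_sw_le (hi : 1 ≤ i) (hin : i + 1 ≤ n) (w : Equiv.Perm ℕ) :
    invCount n (w * sw i) ≤ invCount n w + 1 := by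
  rcases lt_or_gt_apply_succ w i with h | h
  · exact (invCount_mul_sw_of_lt hi hin h).le
  · have := invCount_mul_sw_add_one hi hin h
    omega

lemma invCount_wordProd_le {L : List ℕ} (hL : ∀ i ∈ L, 1 ≤ i ∧ i + 1 ≤ n) :
    invCount n (wordProd L) ≤ L.length := by
  induction L using List.reverseRecOn with
  | nil => simp [wordProd]
  | append_singleton L i ih =>
    have hi := hL i (by simp)
    have := invCount_mul_sw_le hi.1 hi.2 (wordProd L)
    have := ih fun x hx => hL x (by simp [hx])
    rw [wordProd_append_singleton, List.length_append, List.length_singleton]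
    omega

end InvCount

section Descent

variable {n : ℕ} {w x : Equiv.Perm ℕ}

lemma PermOf.eq_one_of_forall_lt_succ (hw : PermOf n w)
    (h : ∀ i, 1 ≤ i → i + 1 ≤ n → w i < w (i + 1)) : w = 1 := by
  have hle : ∀ d a, a + d = n → 1 ≤ a → w a ≤ a := by
    intro d
    induction d with
    | zero =>
      intro a ha h1
      have := mem_Icc.mp (hw.apply_mem_Icc (mem_Icc.mpr ⟨h1, ha.le⟩))
      omega
    | succ d ih =>
      intro a ha h1
      have := ih (a + 1) (by omega) (by omega)
      have := h a h1 (by omega)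
      omega
  refine eq_one_of_forall_apply_le fun a => ?_
  by_cases ha : 1 ≤ a ∧ a ≤ n
  · exact hle (n - a) a (by omega) ha.1
  · rw [hw a (by omega)]

lemma PermOf.exists_descent (hw : PermOf n w) (hne : w ≠ 1) :
    ∃ i, 1 ≤ i ∧ i + 1 ≤ n ∧ w (i + 1) < w i := by
  by_contra! h
  exact hne (hw.eq_one_of_forall_lt_succ fun i hi hin =>
    (lt_or_gt_apply_succ w i).resolve_right (h i hi hin).not_gt)

lemma PermOf.eq_one_of_rankLE_one (hx : PermOf n x) (h : RankLE n x 1) : x = 1 := by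
  refine eq_one_of_forall_apply_le fun a => ?_
  by_cases ha : 1 ≤ a ∧ a ≤ n
  · have hfull : #((Icc 1 a).filter fun b => x b ≤ a) = #(Icc 1 a) := by
      refine le_antisymm (card_filter_le _ _) ?_
      have hid : rankCount ⇑(1 : Equiv.Perm ℕ) a a = #(Icc 1 a) :=
        congrArg card (filter_true_of_mem fun b hb => (mem_Icc.mp hb).2)
      exact hid ▸ h a a ha.1 ha.2
    exact card_filter_eq_iff.mp hfull a (mem_Icc.mpr ⟨ha.1, le_rfl⟩)
  · rw [hx a (by omega)]

end Descent

section Ehresmann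

variable {n : ℕ}

/-- Peel off a descent `s_i` of `w`; `x` keeps or loses `s_i` according as `i` is an ascent or a
descent of `x`. -/
lemma exists_subword_of_rankLE {x w : Equiv.Perm ℕ} (hx : PermOf n x) (hw : PermOf n w)
    (hxw : RankLE n x w) :
    ∃ L, IsWord n L w ∧ L.length = invCount n w ∧ ∃ M, M.Sublist L ∧ wordProd M = x := by
  induction hN : invCount n w using Nat.strong_induction_on generalizing x w with
  | _ N ih =>
    by_cases h1 : w = 1
    · subst h1
      rw [hx.eq_one_of_rankLE_one hxw]
      exact ⟨[], ⟨by simp, rfl⟩, by simp [← hN], [], List.Sublist.slnil, rfl⟩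
    obtain ⟨i, hi, hin, hdesc⟩ := hw.exists_descent h1
    have hinv := invCount_mul_sw_add_one hi hin hdesc
    have hw' : PermOf n (w * sw i) := hw.mul (permOf_sw hi hin)
    have hword {L} (hL : IsWord n L (w * sw i)) (hlen : L.length = invCount n (w * sw i)) :
        IsWord n (L ++ [i]) w ∧ (L ++ [i]).length = N := by
      refine ⟨?_, by simp only [List.length_append, List.length_singleton]; omega⟩
      simpa only [mul_sw_mul_sw] using hL.append_singleton hi hin
    rcases lt_or_gt_apply_succ x i with hasc | hdesc'
    · obtain ⟨L, hL, hlen, M, hM, hMx⟩ :=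
        ih _ (by omega) hx hw' (hxw.le_mul_sw hi hdesc hasc) rfl
      obtain ⟨hL', hlen'⟩ := hword hL hlen
      exact ⟨L ++ [i], hL', hlen', M, hM.trans (List.sublist_append_left L [i]), hMx⟩
    · obtain ⟨L, hL, hlen, M, hM, hMx⟩ :=
        ih _ (by omega) (hx.mul (permOf_sw hi hin)) hw' (hxw.mul_sw hi (Or.inr hdesc')) rfl
      obtain ⟨hL', hlen'⟩ := hword hL hlen
      refine ⟨L ++ [i], hL', hlen', M ++ [i], hM.append (List.Sublist.refl [i]), ?_⟩
      rw [wordProd_append_singleton, hMx, mul_sw_mul_sw]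

lemma len_eq_invCount {w : Equiv.Perm ℕ} (hw : PermOf n w) : len n w = invCount n w := by
  obtain ⟨L, hL, hlen, -⟩ := exists_subword_of_rankLE hw hw (RankLE.refl n w)
  refine le_antisymm (Nat.sInf_le ⟨L, hL, hlen⟩) (le_csInf ⟨_, L, hL, hlen⟩ ?_)
  rintro k ⟨L', hL', rfl⟩
  exact hL'.2 ▸ invCount_wordProd_le hL'.1

lemma IsReduced.of_append_singleton {L : List ℕ} {i : ℕ} {w : Equiv.Perm ℕ}
    (h : IsReduced n (L ++ [i]) w) :
    IsReduced n L (wordProd L) ∧ wordProd L i < wordProd L (i + 1) := by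
  obtain ⟨⟨hlet, rfl⟩, hred⟩ := h
  have hlet₀ : ∀ x ∈ L, 1 ≤ x ∧ x + 1 ≤ n := fun x hx => hlet x (by simp [hx])
  have hi := hlet i (by simp)
  have hle := invCount_wordProd_le hlet₀
  rw [len_eq_invCount (permOf_wordProd hlet), wordProd_append_singleton, List.length_append,
    List.length_singleton] at hred
  have hasc : wordProd L i < wordProd L (i + 1) := by
    refine (lt_or_gt_apply_succ _ i).resolve_right fun hdesc => ?_
    have := invCount_mul_sw_add_one hi.1 hi.2 hdesc
    omega
  have := invCount_mul_sw_of_lt hi.1 hi.2 hasc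
  refine ⟨⟨⟨hlet₀, rfl⟩, ?_⟩, hasc⟩
  rw [len_eq_invCount (permOf_wordProd hlet₀)]
  omega

lemma rankLE_of_sublist {L M : List ℕ} (hL : IsReduced n L (wordProd L)) (hM : M.Sublist L) :
    RankLE n (wordProd M) (wordProd L) := by
  induction L using List.reverseRecOn generalizing M with
  | nil => rw [List.sublist_nil.mp hM]; exact RankLE.refl n _
  | append_singleton L i ih =>
    obtain ⟨hL₀, hasc⟩ := hL.of_append_singleton
    have hi : 1 ≤ i := (hL.1.1 i (by simp)).1
    rw [wordProd_append_singleton]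
    obtain ⟨M₁, M₂, rfl, hM₁, hM₂⟩ := List.sublist_append_iff.mp hM
    rcases List.sublist_singleton.mp hM₂ with rfl | rfl
    · rw [List.append_nil]
      exact (ih hL₀ hM₁).trans (rankLE_mul_sw_of_lt hi hasc)
    · rw [wordProd_append_singleton]
      exact (ih hL₀ hM₁).mul_sw hi (Or.inl hasc)

theorem bruhatLE_iff_rankLE {x w : Equiv.Perm ℕ} (hx : PermOf n x) (hw : PermOf n w) :
    BruhatLE n x w ↔ RankLE n x w := by
  constructor
  · rintro ⟨L, hL, M, hM, rfl⟩
    obtain rfl := hL.1.2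
    exact rankLE_of_sublist hL hM
  · intro h
    obtain ⟨L, hL, hlen, hsub⟩ := exists_subword_of_rankLE hx hw h
    exact ⟨L, ⟨hL, hlen.trans (len_eq_invCount hw).symm⟩, hsub⟩

end Ehresmann

lemma filter_Icc_eq_Icc_card {P : ℕ → Prop} [DecidablePred P] {N : ℕ}
    (hP : ∀ a, 1 ≤ a → a + 1 ≤ N → P (a + 1) → P a) :
    (Icc 1 N).filter P = Icc 1 #((Icc 1 N).filter P) := by
  set S := (Icc 1 N).filter P
  have hdown : ∀ a ∈ S, Icc 1 a ⊆ S := by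
    intro a
    induction a with
    | zero => simp
    | succ a ih =>
      intro ha b hb
      rcases eq_or_ne b (a + 1) with rfl | hne
      · exact ha
      have haS : a ∈ S := by
        simp only [S, mem_filter, mem_Icc] at ha hb ⊢
        exact ⟨by omega, hP a (by omega) (by omega) ha.2⟩
      exact ih haS (mem_Icc.mpr (by simp only [mem_Icc] at hb; omega))
  refine eq_of_subset_of_card_le (fun a ha => mem_Icc.mpr ⟨?_, ?_⟩) (by simp)
  · exact (mem_Icc.mp (mem_filter.mp ha).1).1
  · simpa using card_le_card (hdown a ha)

lemma card_filter_Icc_eq_min {P : ℕ → Prop} [DecidablePred P] {N d : ℕ}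
    (hP : ∀ a, 1 ≤ a → a + 1 ≤ N → P (a + 1) → P a) (hd : d ≤ N) :
    #((Icc 1 d).filter P) = min d #((Icc 1 N).filter P) := by
  have hS := filter_Icc_eq_Icc_card hP
  set v := #((Icc 1 N).filter P)
  have : (Icc 1 d).filter P = Icc 1 (min d v) := by
    ext a
    have ha := Finset.ext_iff.mp hS a
    by_cases hPa : P a <;> simp only [mem_filter, mem_Icc, hPa] at ha ⊢ <;> grind
  simp [this]

section Multipartition

variable {l n : ℕ} {lam : ℕ → ℕ → ℕ}

lemma IsMP.colFilter_eq_Icc (hlam : IsMP l n lam) (m c : ℕ) :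
    (Icc 1 n).filter (fun r => c ≤ lam m r) = Icc 1 (colLen n lam m c) :=
  filter_Icc_eq_Icc_card fun a ha _ h => h.trans (hlam.2.1 m a ha)

lemma IsMP.inDiag_iff (hlam : IsMP l n lam) {r c m : ℕ} :
    InDiag lam (r, c, m) ↔ 1 ≤ c ∧ r ∈ Icc 1 (colLen n lam m c) := by
  simp only [InDiag, ← hlam.colFilter_eq_Icc, mem_filter, mem_Icc]
  refine ⟨fun ⟨hc, hcr⟩ => ⟨hc, ⟨?_, ?_⟩, hcr⟩, fun ⟨hc, _, hcr⟩ => ⟨hc, hcr⟩⟩ <;>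
  · by_contra
    have := hlam.1 m r (by omega)
    omega

lemma IsMP.mem_Icc_of_inDiag (hlam : IsMP l n lam) {r c m : ℕ} (h : InDiag lam (r, c, m)) :
    m ∈ Icc 1 l := by
  obtain ⟨hc, hcr⟩ := h
  rw [mem_Icc]
  by_contra
  have := hlam.1 m r (by omega)
  simp only at hc hcr
  omega

lemma IsMP.apply_le (hlam : IsMP l n lam) (m r : ℕ) : lam m r ≤ n := by
  by_cases h : m ∈ Icc 1 l ∧ r ∈ Icc 1 n
  · calc lam m r ≤ compSize n lam m := single_le_sum (fun _ _ => Nat.zero_le _) h.2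
      _ ≤ ∑ m' ∈ Icc 1 l, compSize n lam m' := single_le_sum (fun _ _ => Nat.zero_le _) h.1
      _ = n := hlam.2.2
  · simp only [mem_Icc] at h
    rw [hlam.1 m r (by omega)]
    exact Nat.zero_le _

lemma IsMP.sum_colLen (hlam : IsMP l n lam) (m : ℕ) :
    ∑ c ∈ Icc 1 n, colLen n lam m c = compSize n lam m := by
  simp only [colLen, compSize, card_filter]
  rw [sum_comm]
  refine sum_congr rfl fun r _ => ?_
  rw [← card_filter]
  have : (Icc 1 n).filter (· ≤ lam m r) = Icc 1 (lam m r) := by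
    ext c
    simp only [mem_filter, mem_Icc]
    have := hlam.apply_le m r
    omega
  simp [this]

/-- The largest entry of `t_λ` in the first `c` columns of component `m` (and in components
`m + 1, …, l`), so that `t_λ (r, c + 1, m) = colEnd l n lam m c + r`. -/
noncomputable def colEnd (l n : ℕ) (lam : ℕ → ℕ → ℕ) (m c : ℕ) : ℕ :=
  (∑ m' ∈ Icc (m + 1) l, compSize n lam m') + ∑ c' ∈ Icc 1 c, colLen n lam m c'

lemma colTab_eq_colEnd_add (r c m : ℕ) :
    colTab l n lam (r, c + 1, m) = colEnd l n lam m c + r := rfl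

lemma colEnd_succ (m c : ℕ) :
    colEnd l n lam m (c + 1) = colEnd l n lam m c + colLen n lam m (c + 1) := by
  rw [colEnd, colEnd, sum_Icc_succ_top (by omega), add_assoc]

@[simp] lemma colEnd_self_zero : colEnd l n lam l 0 = 0 := by simp [colEnd]

lemma IsMP.colEnd_zero (hlam : IsMP l n lam) {m : ℕ} (hm : m + 1 ≤ l) :
    colEnd l n lam m 0 = colEnd l n lam (m + 1) n := by
  rw [colEnd, colEnd, ← insert_Icc_add_one_left_eq_Icc hm, sum_insert (by simp),
    hlam.sum_colLen]
  simp [add_comm]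

end Multipartition

section Tableau

variable {l n : ℕ} {lam : ℕ → ℕ → ℕ} {s t : Node → ℕ} {ws wt : Equiv.Perm ℕ}

lemma rankCount_colEnd_add (hlam : IsMP l n lam)
    (hws : IsPermOfTab n lam (colTab l n lam) s ws) {m c d : ℕ}
    (hd : d ≤ colLen n lam m (c + 1)) (j : ℕ) :
    rankCount ws (colEnd l n lam m c + d) j =
      rankCount ws (colEnd l n lam m c) j + rankCount (fun r => s (r, c + 1, m)) d j := by
  rw [rankCount_add]
  congr 1
  refine rankCount_congr fun r hr hrd => ?_
  rw [← colTab_eq_colEnd_add]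
  exact hws.2 _ (hlam.inDiag_iff.mpr ⟨by omega, mem_Icc.mpr ⟨hr, hrd.trans hd⟩⟩)

lemma shapeConj_eq_rankCount (hlam : IsMP l n lam) (s : Node → ℕ) (j m c : ℕ) :
    shapeConj l n lam s j m c =
      rankCount (fun r => s (r, c, l + 1 - m)) (colLen n lam (l + 1 - m) c) j := by
  rw [shapeConj, rankCount, ← hlam.colFilter_eq_Icc, filter_filter]

lemma sum_shapeConj_add_rankCount (hlam : IsMP l n lam)
    (hws : IsPermOfTab n lam (colTab l n lam) s ws) (j m r : ℕ) :
    ∑ c ∈ Icc 1 r, shapeConj l n lam s j m c + rankCount ws (colEnd l n lam (l + 1 - m) 0) j =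
      rankCount ws (colEnd l n lam (l + 1 - m) r) j := by
  induction r with
  | zero => simp
  | succ r ih =>
    rw [sum_Icc_succ_top (by omega), colEnd_succ, rankCount_colEnd_add hlam hws le_rfl, ← ih,
      shapeConj_eq_rankCount hlam]
    ring

lemma sum_compSize_shapeConj (hlam : IsMP l n lam)
    (hws : IsPermOfTab n lam (colTab l n lam) s ws) (j : ℕ) :
    ∀ m, m + 1 ≤ l → ∑ m' ∈ Icc 1 m, compSize n (shapeConj l n lam s j) m' =
      rankCount ws (colEnd l n lam (l - m) 0) j
  | 0, _ => by simp
  | m + 1, hm => by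
    rw [sum_Icc_succ_top (by omega), sum_compSize_shapeConj hlam hws j m (by omega), compSize,
      add_comm, show l - m = l + 1 - (m + 1) by omega, sum_shapeConj_add_rankCount hlam hws,
      hlam.colEnd_zero (by omega), show l - (m + 1) + 1 = l + 1 - (m + 1) by omega]

lemma dom_sum_shapeConj (hlam : IsMP l n lam)
    (hws : IsPermOfTab n lam (colTab l n lam) s ws) {m : ℕ} (hm : 1 ≤ m) (hml : m ≤ l)
    (j r : ℕ) :
    (∑ m' ∈ Icc 1 (m - 1), compSize n (shapeConj l n lam s j) m') +
        ∑ c ∈ Icc 1 r, shapeConj l n lam s j m c =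
      rankCount ws (colEnd l n lam (l + 1 - m) r) j := by
  rw [sum_compSize_shapeConj hlam hws j (m - 1) (by omega), show l - (m - 1) = l + 1 - m by omega,
    add_comm, sum_shapeConj_add_rankCount hlam hws]

lemma dom_shapeConj_iff (hlam : IsMP l n lam)
    (hws : IsPermOfTab n lam (colTab l n lam) s ws)
    (hwt : IsPermOfTab n lam (colTab l n lam) t wt) (j : ℕ) :
    Dom l n (shapeConj l n lam s j) (shapeConj l n lam t j) ↔
      ∀ m c, 1 ≤ m → m ≤ l →
        rankCount wt (colEnd l n lam m c) j ≤ rankCount ws (colEnd l n lam m c) j := by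
  refine ⟨fun h m c hm hml => ?_, fun h m c hm hml => ?_⟩
  · have := h (l + 1 - m) c (by omega) (by omega)
    rwa [dom_sum_shapeConj hlam hws (by omega) (by omega),
      dom_sum_shapeConj hlam hwt (by omega) (by omega), show l + 1 - (l + 1 - m) = m by omega]
      at this
  · rw [dom_sum_shapeConj hlam hws hm hml, dom_sum_shapeConj hlam hwt hm hml]
    exact h _ c (by omega) (by omega)

lemma exists_colTab_eq (hs : IsTab n lam s) (hws : IsPermOfTab n lam (colTab l n lam) s ws)
    {k : ℕ} (hk : k ∈ Icc 1 n) : ∃ A, InDiag lam A ∧ colTab l n lam A = k := by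
  obtain ⟨h₁, h₂⟩ := mem_Icc.mp (hws.1.apply_mem_Icc hk)
  obtain ⟨A, hA, hsA⟩ := hs.2.2 (ws k) h₁ h₂
  exact ⟨A, hA, ws.injective (by rw [hws.2 A hA, hsA])⟩

lemma ColStrict.rankCount_column (hlam : IsMP l n lam) {u : Node → ℕ} (hu : ColStrict lam u)
    {m c d : ℕ} (hd : d ≤ colLen n lam m (c + 1)) (j : ℕ) :
    rankCount (fun r => u (r, c + 1, m)) d j =
      min d (rankCount (fun r => u (r, c + 1, m)) (colLen n lam m (c + 1)) j) := by
  refine card_filter_Icc_eq_min (fun a ha haN h => ?_) hd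
  have hmem (b : ℕ) (hb : 1 ≤ b) (hbN : b ≤ colLen n lam m (c + 1)) :
      InDiag lam (b, c + 1, m) :=
    hlam.inDiag_iff.mpr ⟨by omega, mem_Icc.mpr ⟨hb, hbN⟩⟩
  exact (hu a (c + 1) m (hmem a ha (by omega)) (hmem (a + 1) (by omega) haN)).le.trans h

lemma rankCount_le_of_le_colEnd (hlam : IsMP l n lam) (hs : IsTab n lam s)
    (hscol : ColStrict lam s) (htcol : ColStrict lam t)
    (hws : IsPermOfTab n lam (colTab l n lam) s ws)
    (hwt : IsPermOfTab n lam (colTab l n lam) t wt) {j : ℕ} (hj : j ≤ n)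
    (h : ∀ m c, 1 ≤ m → m ≤ l →
      rankCount wt (colEnd l n lam m c) j ≤ rankCount ws (colEnd l n lam m c) j) (k : ℕ) :
    rankCount wt k j ≤ rankCount ws k j := by
  suffices key : ∀ k ≤ n, rankCount wt k j ≤ rankCount ws k j by
    rcases le_or_gt k n with hk | hk
    · exact key k hk
    · rw [rankCount_eq_of_le hwt.1 hj hk.le, rankCount_eq_of_le hws.1 hj hk.le]
      exact key n le_rfl
  intro k hkn
  rcases Nat.eq_zero_or_pos k with rfl | hk
  · simp
  obtain ⟨⟨r, c, m⟩, hA, rfl⟩ := exists_colTab_eq hs hws (mem_Icc.mpr ⟨hk, hkn⟩)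
  have hm := mem_Icc.mp (hlam.mem_Icc_of_inDiag hA)
  obtain ⟨hc, hr⟩ := hlam.inDiag_iff.mp hA
  obtain ⟨c, rfl⟩ : ∃ c', c = c' + 1 := ⟨c - 1, by omega⟩
  have hr := (mem_Icc.mp hr).2
  have hstart := h m c hm.1 hm.2
  have hend := h m (c + 1) hm.1 hm.2
  rw [colEnd_succ, rankCount_colEnd_add hlam hwt le_rfl, rankCount_colEnd_add hlam hws le_rfl]
    at hend
  rw [colTab_eq_colEnd_add, rankCount_colEnd_add hlam hwt hr, rankCount_colEnd_add hlam hws hr,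
    hscol.rankCount_column hlam hr, htcol.rankCount_column hlam hr]
  omega

end Tableau

theorem bruhat_iff_conj_shape_dominance_general (l n : ℕ)
    (lam : ℕ → ℕ → ℕ) (hlam : IsMP l n lam)
    (s t : Node → ℕ) (hs : IsTab n lam s)
    (hscol : ColStrict lam s) (htcol : ColStrict lam t)
    (ws wt : Equiv.Perm ℕ)
    (hws : IsPermOfTab n lam (colTab l n lam) s ws)
    (hwt : IsPermOfTab n lam (colTab l n lam) t wt) :
    BruhatLE n ws wt ↔
      ∀ m, 1 ≤ m → m ≤ n → Dom l n (shapeConj l n lam s m) (shapeConj l n lam t m) := by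
  rw [bruhatLE_iff_rankLE hws.1 hwt.1]
  refine ⟨fun h j hj hjn => ?_, fun h k j hj hjn => ?_⟩
  · exact (dom_shapeConj_iff hlam hws hwt j).mpr fun m c _ _ => h _ j hj hjn
  · exact rankCount_le_of_le_colEnd hlam hs hscol htcol hws hwt hjn
      ((dom_shapeConj_iff hlam hws hwt j).mp (h j hj hjn)) k

/-- For column-strict `λ`-tableaux `s, t`: `w_s ≤ w_t` in the Bruhat
order iff `Shape(s↓m)' ⊵ Shape(t↓m)'` for all `m = 1,…,n`. -/
theorem bruhat_iff_conj_shape_dominance (l n : ℕ) (hl : 1 ≤ l) (hn : 1 ≤ n)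
    (lam : ℕ → ℕ → ℕ) (hlam : IsMP l n lam)
    (s t : Node → ℕ) (hs : IsTab n lam s) (ht : IsTab n lam t)
    (hscol : ColStrict lam s) (htcol : ColStrict lam t)
    (ws wt : Equiv.Perm ℕ)
    (hws : IsPermOfTab n lam (colTab l n lam) s ws)
    (hwt : IsPermOfTab n lam (colTab l n lam) t wt) :
    BruhatLE n ws wt ↔
      ∀ m, 1 ≤ m → m ≤ n → Dom l n (shapeConj l n lam s m) (shapeConj l n lam t m) :=
  bruhat_iff_conj_shape_dominance_general l n lam hlam s t hs hscol htcol ws wt hws hwt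

end FS
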